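/- Under the hypotheses of the previous statement, if additionally lim_{k→∞} H_k(x_k, p#_{φ_k,H_k}(x_k)) = H(x, p#_{φ,H}(x)), then lim_{k→∞} p#_{φ_k,H_k}(x_k) = p#_{φ,H}(x). -/

import Mathlib

open MeasureTheory Filter Topology Set

noncomputable section

abbrev En (n : ℕ) := EuclideanSpace ℝ (Fin n)

/-- ω is a modulus: nonnegative, nondecreasing, upper semicontinuous on [0,∞), ω(0⁺)=0. -/
def IsModulus (ω : ℝ → ℝ) : Prop :=
  (∀ r, 0 ≤ ω r) ∧ MonotoneOn ω (Set.Ici 0) ∧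
    UpperSemicontinuousOn ω (Set.Ici 0) ∧
    Tendsto ω (nhdsWithin 0 (Set.Ioi 0)) (nhds 0)

/-- φ is ω-semiconcave on ℝⁿ. -/
def Semiconcave {n : ℕ} (ω : ℝ → ℝ) (φ : En n → ℝ) : Prop :=
  ∀ x y : En n, ∀ l ∈ Set.Icc (0:ℝ) 1,
    l * φ x + (1 - l) * φ y - φ (l • x + (1 - l) • y) ≤
      l * (1 - l) * ‖x - y‖ * ω ‖x - y‖

/-- The (Dini/Fréchet) superdifferential D⁺φ(x) of an ω-semiconcave function. -/
def superdiff {n : ℕ} (ω : ℝ → ℝ) (φ : En n → ℝ) (x : En n) : Set (En n) :=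
  {p | ∀ y, φ y ≤ φ x + (inner ℝ p (y - x) : ℝ) + ‖y - x‖ * ω ‖y - x‖}

/-- Conditions (H1)-(H3) on the Hamiltonian H, with p-gradient Hp. -/
structure HamCond {n : ℕ} (H : En n → En n → ℝ) (Hp : En n → En n → En n) : Prop where
  lip : LocallyLipschitz (Function.uncurry H)
  grad : ∀ x p, HasGradientAt (H x) (Hp x p) p
  contHp : Continuous (Function.uncurry Hp)
  sconv : ∀ x, StrictConvexOn ℝ Set.univ (H x)
  superlin : ∀ c : ℝ, ∃ R : ℝ, ∀ (x p : En n), R ≤ ‖p‖ → c * ‖p‖ ≤ H x p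

/-- The Lagrangian associated to H via the Legendre transform. -/
def Lag {n : ℕ} (H : En n → En n → ℝ) (x v : En n) : ℝ :=
  ⨆ p : En n, ((inner ℝ p v : ℝ) - H x p)

/-- pS is the minimal-energy selection of the superdifferential. -/
def IsMinSel {n : ℕ} (ω : ℝ → ℝ) (φ : En n → ℝ) (H : En n → En n → ℝ)
    (pS : En n → En n) : Prop :=
  ∀ x, pS x ∈ superdiff ω φ x ∧ ∀ q ∈ superdiff ω φ x, H x (pS x) ≤ H x q

/-! The selections `pₖ = p#_{φₖ,Hₖ}(xₖ)` have bounded energies, so by convexity of `Hₖ(xₖ, ·)`,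
superlinearity of `H` and locally uniform convergence they stay in a bounded set; it then suffices
to identify every cluster point `a`. Passing to the limit in the superdifferential inequalities
(with `ω` upper semicontinuous) gives `a ∈ D⁺φ(x)`, and the energy hypothesis gives
`H(x, a) = H(x, p#_{φ,H}(x))`. As `D⁺φ(x)` is convex and `H(x, ·)` strictly convex, the minimiser of
`H(x, ·)` on `D⁺φ(x)` is unique, so `a = p#_{φ,H}(x)`. -/

theorem TendstoUniformly.mono_left {ι α β : Type*} [UniformSpace β] {F : ι → α → β}
    {f : α → β} {l l' : Filter ι} (h : TendstoUniformly F f l) (hl : l' ≤ l) :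
    TendstoUniformly F f l' :=
  fun u hu => hl (h u hu)

theorem TendstoLocallyUniformly.mono_left {ι α β : Type*} [TopologicalSpace α] [UniformSpace β]
    {F : ι → α → β} {f : α → β} {l l' : Filter ι} (h : TendstoLocallyUniformly F f l)
    (hl : l' ≤ l) : TendstoLocallyUniformly F f l' :=
  fun u hu z => (h u hu z).imp fun _ ht => ⟨ht.1, hl ht.2⟩

theorem ConvexOn.norm_lt_of_lt_on_sphere {E : Type*} [NormedAddCommGroup E] [NormedSpace ℝ E]
    {f : E → ℝ} (hf : ConvexOn ℝ univ f) {R M : ℝ} (hR : 0 ≤ R) (h0 : f 0 ≤ M)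
    (hsphere : ∀ q, ‖q‖ = R → M < f q) {p : E} (hp : f p ≤ M) : ‖p‖ < R := by
  by_contra! hpR
  have ht : R / ‖p‖ ≤ 1 := div_le_one_of_le₀ hpR (norm_nonneg p)
  have hq : (R / ‖p‖) • p ∈ segment ℝ 0 p :=
    ⟨1 - R / ‖p‖, R / ‖p‖, sub_nonneg.2 ht, by positivity, by ring, by simp⟩
  have hnorm : ‖(R / ‖p‖) • p‖ = R := by
    rcases (norm_nonneg p).eq_or_lt with hp0 | hp0
    · rw [← hp0] at hpR ⊢
      simp [le_antisymm hpR hR]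
    · rw [norm_smul, Real.norm_of_nonneg (by positivity), div_mul_cancel₀ _ hp0.ne']
  exact (hsphere _ hnorm).not_ge
    ((hf.le_on_segment (mem_univ _) (mem_univ _) hq).trans (max_le h0 hp))

theorem eventually_norm_le_of_energy_le {ι X E : Type*} [TopologicalSpace X]
    [LocallyCompactSpace X] [NormedAddCommGroup E] [NormedSpace ℝ E] [ProperSpace E]
    {l : Filter ι} {Hk : ι → X → E → ℝ} {H : X → E → ℝ}
    {xk : ι → X} {x : X} {pk : ι → E} {M : ℝ}
    (hconv : ∀ i y, ConvexOn ℝ univ (Hk i y)) (hcont : ContinuousAt (Function.uncurry H) (x, 0))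
    (hsuper : ∀ c : ℝ, ∃ R : ℝ, ∀ y p, R ≤ ‖p‖ → c * ‖p‖ ≤ H y p)
    (hlim : TendstoLocallyUniformly (fun i => Function.uncurry (Hk i)) (Function.uncurry H) l)
    (hx : Tendsto xk l (𝓝 x))
    (hE : ∀ᶠ i in l, Hk i (xk i) (pk i) ≤ M) :
    ∃ R, ∀ᶠ i in l, ‖pk i‖ ≤ R := by
  set M' := max M (H x 0 + 1)
  have h0 : ∀ᶠ i in l, Hk i (xk i) 0 ≤ M' :=
    ((hlim.tendsto_comp hcont (hx.prodMk_nhds tendsto_const_nhds)).eventually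
      (eventually_le_nhds (lt_add_one _))).mono fun _ h => h.trans (le_max_right _ _)
  obtain ⟨R₀, hR₀⟩ := hsuper (|M'| + 1)
  set R := max R₀ 1
  obtain ⟨N, hN, hNx⟩ := exists_compact_mem_nhds x
  have hunif := (tendstoLocallyUniformly_iff_forall_isCompact.1 hlim) _
    (hN.prod (isCompact_sphere (0 : E) R))
  -- `H ≥ M' + 1` on the sphere of radius `R`, and uniform convergence on `N × sphere` passes
  -- `M' < Hₖ(xₖ, ·)` on that sphere to large indices; convexity then confines `pₖ` to the ball
  refine ⟨R, ?_⟩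
  filter_upwards [hE, h0, hx hNx, Metric.tendstoUniformlyOn_iff.1 hunif 1 one_pos]
    with i hEi h0i hxi hclose
  refine (hconv i (xk i)).norm_lt_of_lt_on_sphere (by positivity) h0i (fun q hq => ?_)
    (hEi.trans (le_max_left _ _)) |>.le
  have hHq : M' + 1 ≤ H (xk i) q := calc
    M' + 1 ≤ (|M'| + 1) * R := by
      nlinarith [le_abs_self M', abs_nonneg M', le_max_right R₀ 1]
    _ ≤ H (xk i) q := hq ▸ hR₀ _ _ (hq ▸ le_max_left _ _)
  have hdist := hclose (xk i, q) ⟨hxi, mem_sphere_zero_iff_norm.2 hq⟩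
  rw [Real.dist_eq, abs_lt] at hdist
  simp only [Function.uncurry_apply_pair] at hdist
  linarith

theorem convex_superdiff {n : ℕ} (ω : ℝ → ℝ) (φ : En n → ℝ) (x : En n) :
    Convex ℝ (superdiff ω φ x) := by
  intro p hp q hq a b ha hb hab y
  have hpq : (inner ℝ (a • p + b • q) (y - x) : ℝ) =
      a * inner ℝ p (y - x) + b * inner ℝ q (y - x) := by
    rw [inner_add_left, real_inner_smul_left, real_inner_smul_left]
  rw [hpq]
  linear_combination (exp := 1) a * hp y + b * hq y - (φ y - φ x - ‖y - x‖ * ω ‖y - x‖) * hab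

theorem tendsto_mul_modulus {ω : ℝ → ℝ} (hω0 : ∀ r, 0 ≤ ω r)
    (hωusc : UpperSemicontinuousOn ω (Ici 0)) :
    Tendsto (fun r => r * ω r) (𝓝[≥] 0) (𝓝 0) := by
  have hbound : ∀ᶠ r in 𝓝[≥] (0 : ℝ), ω r < ω 0 + 1 :=
    hωusc 0 self_mem_Ici _ (lt_add_one _)
  refine squeeze_zero' (eventually_nhdsWithin_of_forall fun r hr => mul_nonneg hr (hω0 r))
    (hbound.mp (eventually_nhdsWithin_of_forall fun r hr hωr =>
      mul_le_mul_of_nonneg_left hωr.le hr)) ?_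
  simpa using ((tendsto_id (x := 𝓝[≥] (0 : ℝ))).mono_right nhdsWithin_le_nhds).mul_const
    (ω 0 + 1)

theorem Filter.Tendsto.norm_sub_mul_modulus {ι E : Type*} [SeminormedAddCommGroup E]
    {l : Filter ι} {ω : ℝ → ℝ} (hω0 : ∀ r, 0 ≤ ω r) (hωusc : UpperSemicontinuousOn ω (Ici 0))
    {xk : ι → E} {x : E} (hx : Tendsto xk l (𝓝 x)) :
    Tendsto (fun i => ‖xk i - x‖ * ω ‖xk i - x‖) l (𝓝 0) :=
  (tendsto_mul_modulus hω0 hωusc).comp <| tendsto_nhdsWithin_iff.2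
    ⟨by simpa using (hx.sub_const x).norm, Eventually.of_forall fun _ => norm_nonneg _⟩

theorem tendsto_apply_of_mem_superdiff {ι : Type*} {l : Filter ι} {n : ℕ} {ω : ℝ → ℝ}
    (hω0 : ∀ r, 0 ≤ ω r) (hωusc : UpperSemicontinuousOn ω (Ici 0))
    {φk : ι → En n → ℝ} {φ : En n → ℝ} (hφ : TendstoUniformly φk φ l)
    {xk pk : ι → En n} {x a q : En n} (hx : Tendsto xk l (𝓝 x)) (hpa : Tendsto pk l (𝓝 a))
    (hp : ∀ i, pk i ∈ superdiff ω (φk i) (xk i)) (hq : q ∈ superdiff ω φ x) :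
    Tendsto (fun i => φk i (xk i)) l (𝓝 (φ x)) := by
  have hr := hx.norm_sub_mul_modulus hω0 hωusc
  have hr' : Tendsto (fun i => ‖x - xk i‖ * ω ‖x - xk i‖) l (𝓝 0) := by
    simpa only [norm_sub_rev] using hr
  have hdiag : Tendsto (fun i => φk i (xk i) - φ (xk i)) l (𝓝 0) := by
    refine Metric.tendsto_nhds.2 fun ε hε => ?_
    filter_upwards [Metric.tendstoUniformly_iff.1 hφ ε hε] with i hi
    simpa [Real.dist_eq, abs_sub_comm] using hi (xk i)
  have hlower : Tendsto (fun i => φk i x - inner ℝ (pk i) (x - xk i) -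
      ‖x - xk i‖ * ω ‖x - xk i‖) l (𝓝 (φ x)) := by
    simpa using ((hφ.tendsto_at x).sub (hpa.inner (hx.const_sub x))).sub hr'
  have hupper : Tendsto (fun i => (φk i (xk i) - φ (xk i)) + (φ x + inner ℝ q (xk i - x) +
      ‖xk i - x‖ * ω ‖xk i - x‖)) l (𝓝 (φ x)) := by
    simpa using
      hdiag.add ((tendsto_const_nhds.add (tendsto_const_nhds.inner (hx.sub_const x))).add hr)
  -- squeeze: `pₖ ∈ D⁺φₖ(xₖ)` bounds `φₖ(xₖ)` from below, `q ∈ D⁺φ(x)` bounds `φ(xₖ)` from above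
  refine tendsto_of_tendsto_of_tendsto_of_le_of_le hlower hupper (fun i => ?_) (fun i => ?_)
  · linarith [hp i x]
  · linarith [hq (xk i)]

theorem mem_superdiff_of_tendsto {ι : Type*} {l : Filter ι} [l.NeBot] {n : ℕ} {ω : ℝ → ℝ}
    (hωusc : UpperSemicontinuousOn ω (Ici 0)) {φk : ι → En n → ℝ} {φ : En n → ℝ}
    {xk pk : ι → En n} {x a : En n} (hφ : ∀ y, Tendsto (fun i => φk i y) l (𝓝 (φ y)))
    (hφx : Tendsto (fun i => φk i (xk i)) l (𝓝 (φ x)))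
    (hx : Tendsto xk l (𝓝 x)) (hpa : Tendsto pk l (𝓝 a))
    (hp : ∀ i, pk i ∈ superdiff ω (φk i) (xk i)) : a ∈ superdiff ω φ x := by
  intro y
  set r := ‖y - x‖
  have hrk : Tendsto (fun i => ‖y - xk i‖) l (𝓝[Ici 0] r) := tendsto_nhdsWithin_iff.2
    ⟨(hx.const_sub y).norm, Eventually.of_forall fun _ => norm_nonneg _⟩
  -- every `c > ω r` eventually bounds `ω ‖y - xk i‖`, by upper semicontinuity
  have hc : ∀ c ∈ Ioi (ω r), φ y ≤ φ x + inner ℝ a (y - x) + r * c := fun c hc => by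
    refine le_of_tendsto_of_tendsto (hφ y)
      ((hφx.add (hpa.inner (hx.const_sub y))).add ((hx.const_sub y).norm.mul_const c)) ?_
    filter_upwards [hrk.eventually (hωusc r (norm_nonneg _) c hc)] with i hi
    nlinarith [hp i y, norm_nonneg (y - xk i)]
  refine ge_of_tendsto (x := 𝓝[>] (ω r)) ?_ (eventually_nhdsWithin_of_forall hc)
  exact ((continuous_const.add (continuous_const.mul continuous_id)).tendsto _).mono_left
    nhdsWithin_le_nhds

theorem IsMinSel.eq_of_mem_superdiff {n : ℕ} {ω : ℝ → ℝ} {φ : En n → ℝ}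
    {H : En n → En n → ℝ} {pS : En n → En n} (hpS : IsMinSel ω φ H pS) {x a : En n}
    (hH : StrictConvexOn ℝ univ (H x)) (ha : a ∈ superdiff ω φ x) (hle : H x a ≤ H x (pS x)) :
    a = pS x :=
  (hH.subset (subset_univ _) (convex_superdiff ω φ x)).eq_of_isMinOn
    (fun q hq => hle.trans ((hpS x).2 q hq)) (fun q hq => (hpS x).2 q hq) ha (hpS x).1

theorem stmt_7_general {n : ℕ} (ω : ℝ → ℝ) (hω : IsModulus ω)
    (Hk : ℕ → En n → En n → ℝ) (Hpk : ℕ → En n → En n → En n)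
    (hHk : ∀ k, HamCond (Hk k) (Hpk k))
    (H : En n → En n → ℝ) (Hp : En n → En n → En n) (hH : HamCond H Hp)
    (hHconv : TendstoLocallyUniformly (fun k => Function.uncurry (Hk k))
      (Function.uncurry H) atTop)
    (φk : ℕ → En n → ℝ) (φ : En n → ℝ)
    (hφconv : TendstoUniformly φk φ atTop)
    (pSk : ℕ → En n → En n) (hpSk : ∀ k, IsMinSel ω (φk k) (Hk k) (pSk k))
    (pS : En n → En n) (hpS : IsMinSel ω φ H pS)
    (xk : ℕ → En n) (x : En n) (hx : Tendsto xk atTop (𝓝 x))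
    (hE : Tendsto (fun k => Hk k (xk k) (pSk k (xk k))) atTop (𝓝 (H x (pS x)))) :
    Tendsto (fun k => pSk k (xk k)) atTop (𝓝 (pS x)) := by
  obtain ⟨hω0, -, hωusc, -⟩ := hω
  obtain ⟨R, hR⟩ := eventually_norm_le_of_energy_le (fun k y => ((hHk k).sconv y).convexOn)
    hH.lip.continuous.continuousAt hH.superlin hHconv hx
    (hE.eventually (eventually_le_nhds (lt_add_one _)))
  refine (isCompact_closedBall (0 : En n) R).tendsto_nhds_of_unique_mapClusterPt
    (hR.mono fun k hk => mem_closedBall_zero_iff.2 hk) fun a _ ha => ?_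
  -- the indices along which the selections approach the cluster point `a`
  set l := atTop ⊓ comap (fun k => pSk k (xk k)) (𝓝 a)
  have : l.NeBot := neBot_inf_comap_iff_map.2 (by rwa [inf_comm])
  have hxl : Tendsto xk l (𝓝 x) := hx.mono_left inf_le_left
  have hpa : Tendsto (fun k => pSk k (xk k)) l (𝓝 a) := tendsto_comap.mono_left inf_le_right
  have hφl : TendstoUniformly φk φ l := hφconv.mono_left inf_le_left
  have hp : ∀ k, pSk k (xk k) ∈ superdiff ω (φk k) (xk k) := fun k => (hpSk k (xk k)).1
  have hmem : a ∈ superdiff ω φ x :=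
    mem_superdiff_of_tendsto hωusc hφl.tendsto_at
      (tendsto_apply_of_mem_superdiff hω0 hωusc hφl hxl hpa hp (hpS x).1) hxl hpa hp
  have henergy : H x a = H x (pS x) := tendsto_nhds_unique
    ((hHconv.mono_left inf_le_left).tendsto_comp hH.lip.continuous.continuousAt
      (hxl.prodMk_nhds hpa)) (hE.mono_left inf_le_left)
  exact hpS.eq_of_mem_superdiff (hH.sconv x) hmem henergy.le

/-- convergence of energies implies convergence of minimal-energy selections. -/
theorem stmt_7 {n : ℕ} (ω : ℝ → ℝ) (hω : IsModulus ω)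
    (Hk : ℕ → En n → En n → ℝ) (Hpk : ℕ → En n → En n → En n)
    (hHk : ∀ k, HamCond (Hk k) (Hpk k))
    (H : En n → En n → ℝ) (Hp : En n → En n → En n) (hH : HamCond H Hp)
    (hHconv : TendstoLocallyUniformly (fun k => Function.uncurry (Hk k))
      (Function.uncurry H) atTop)
    (φk : ℕ → En n → ℝ) (φ : En n → ℝ)
    (hsc : ∀ k, Semiconcave ω (φk k))
    (hφconv : TendstoUniformly φk φ atTop)
    (pSk : ℕ → En n → En n) (hpSk : ∀ k, IsMinSel ω (φk k) (Hk k) (pSk k))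
    (pS : En n → En n) (hpS : IsMinSel ω φ H pS)
    (xk : ℕ → En n) (x : En n) (hx : Tendsto xk atTop (𝓝 x))
    (hE : Tendsto (fun k => Hk k (xk k) (pSk k (xk k))) atTop (𝓝 (H x (pS x)))) :
    Tendsto (fun k => pSk k (xk k)) atTop (𝓝 (pS x)) :=
  stmt_7_general ω hω Hk Hpk hHk H Hp hH hHconv φk φ hφconv pSk hpSk pS hpS xk x hx hE
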